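/- Let A be an irreducible nonnegative real n×n matrix with spectral radius ρ, let f be a real polynomial, and let y be a nonzero nonnegative vector. If f(A)y ≥ ry entrywise for some real r, then f(ρ) ≥ r, with equality if and only if f(A)y = ry. -/

import Mathlib

open SimpleGraph

/-- `H` is a minor of `G`: there are nonempty pairwise-disjoint connected branch sets
in `G`, one for each vertex of `H`, with an edge of `G` between the branch sets of any
two adjacent vertices of `H`. -/
def SimpleGraph.IsMinorOf {β V : Type*} (H : SimpleGraph β) (G : SimpleGraph V) : Prop :=
  ∃ f : β → Set V,
    (∀ b, (f b).Nonempty) ∧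
    (Pairwise fun b₁ b₂ => Disjoint (f b₁) (f b₂)) ∧
    (∀ b, (G.induce (f b)).Connected) ∧
    (∀ b₁ b₂, H.Adj b₁ b₂ → ∃ a₁ ∈ f b₁, ∃ a₂ ∈ f b₂, G.Adj a₁ a₂)

/-- A graph is outerplanar iff it has no `K₄` minor and no `K_{2,3}` minor. -/
def SimpleGraph.Outerplanar {V : Type*} (G : SimpleGraph V) : Prop :=
  ¬ (completeGraph (Fin 4)).IsMinorOf G ∧
  ¬ (completeBipartiteGraph (Fin 2) (Fin 3)).IsMinorOf G

/-- The graph obtained from `G` by adding the edge `uv`. -/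
def SimpleGraph.addEdge {V : Type*} (G : SimpleGraph V) (u v : V) : SimpleGraph V :=
  G ⊔ SimpleGraph.fromEdgeSet {s(u, v)}

/-- An (edge-)maximal bipartite outerplanar graph: bipartite and outerplanar, and adding any
new edge between distinct non-adjacent vertices destroys outerplanarity or bipartiteness. -/
def SimpleGraph.MaxBipOuterplanar {V : Type*} (G : SimpleGraph V) : Prop :=
  G.Outerplanar ∧ G.Colorable 2 ∧
    ∀ u v : V, u ≠ v → ¬ G.Adj u v →
      ¬ ((G.addEdge u v).Outerplanar ∧ (G.addEdge u v).Colorable 2)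

/-- A graph on at least 3 vertices is 2-connected if it is connected and remains
connected after deleting any single vertex. -/
def SimpleGraph.TwoConnected {V : Type*} [Fintype V] (G : SimpleGraph V) : Prop :=
  3 ≤ Fintype.card V ∧ G.Connected ∧
    ∀ v : V, (((⊤ : G.Subgraph).deleteVerts {v}).coe).Connected

/-- The spectral radius of a graph: the largest (real) eigenvalue of its adjacency matrix. -/
noncomputable def SimpleGraph.specRad {V : Type*} [Fintype V] (G : SimpleGraph V) : ℝ := by
  classical exact sSup (spectrum ℝ (G.adjMatrix ℝ))

/-- The least eigenvalue of a graph: the smallest (real) eigenvalue of its adjacency matrix. -/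
noncomputable def SimpleGraph.leastEig {V : Type*} [Fintype V] (G : SimpleGraph V) : ℝ := by
  classical exact sInf (spectrum ℝ (G.adjMatrix ℝ))

/-- The star on `n` vertices: vertex `0` adjacent to all others. -/
def starGraph (n : ℕ) : SimpleGraph (Fin n) where
  Adj i j := i ≠ j ∧ (i.val = 0 ∨ j.val = 0)
  symm := by constructor; intro i j h; exact ⟨h.1.symm, h.2.symm⟩
  loopless := by constructor; intro i h; exact h.1 rfl

/-- The spectral radius of a real square matrix: the supremum of the moduli of its
complex eigenvalues. -/
noncomputable def matSpecRad {n : ℕ} (A : Matrix (Fin n) (Fin n) ℝ) : ℝ :=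
  sSup ((fun z : ℂ => ‖z‖) '' spectrum ℂ (A.map Complex.ofReal))

/-- Irreducibility of a nonnegative matrix: for all `i j` some power has positive `(i,j)` entry. -/
def MatIrreducible {n : ℕ} (A : Matrix (Fin n) (Fin n) ℝ) : Prop :=
  ∀ i j, ∃ k : ℕ, 0 < (A ^ k) i j

/-- A combinatorial plane embedding of a (connected) graph `G`: a family of closed walks
(face boundaries) such that every edge of `G` lies on exactly two face sides, together
with Euler's formula. -/
structure PlaneEmbedding {V : Type*} [Fintype V] [DecidableEq V]
    (G : SimpleGraph V) [DecidableRel G.Adj] where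
  numFaces : ℕ
  base : Fin numFaces → V
  boundary : (f : Fin numFaces) → G.Walk (base f) (base f)
  edge_twice : ∀ e ∈ G.edgeSet, (∑ f : Fin numFaces, ((boundary f).edges.count e)) = 2
  euler : (Fintype.card V : ℤ) + numFaces - G.edgeFinset.card = 2

/-- An outerplane embedding: a plane embedding with a distinguished (outer) face whose
boundary passes through every vertex of `G`. -/
structure OuterplaneEmbedding {V : Type*} [Fintype V] [DecidableEq V]
    (G : SimpleGraph V) [DecidableRel G.Adj] extends PlaneEmbedding G where
  outer : Fin numFaces
  outer_all : ∀ v : V, v ∈ (boundary outer).support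


/-!
Perron–Frobenius gives a positive vector `x` with `xᵀ A = ρ xᵀ`, hence `xᵀ f(A) = f(ρ) xᵀ`.
Pairing the nonnegative vector `d = f(A) y - r y` with `x` yields
`⟨x, d⟩ = (f(ρ) - r) ⟨x, y⟩` with `⟨x, y⟩ > 0`, so `r ≤ f(ρ)`, and since `x` is positive,
`⟨x, d⟩ = 0` forces `d = 0`.

The Perron vector is a maximiser over the simplex of the Collatz–Wielandt function
`w ↦ minᵢ (Aᵀ w)ᵢ / wᵢ` precomposed with the positive matrix `B = ∑_{k ≤ m} (Aᵀ)ᵏ`, which keeps it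
continuous and, commuting with `Aᵀ`, turns every non-eigenvector into a strict improvement. Its
eigenvalue is `ρ` because pairing with it bounds `‖μ‖` by that eigenvalue for every complex
eigenvalue `μ` of `A`.
-/

open Matrix Finset Polynomial

namespace Matrix

variable {ι R K : Type*} [Fintype ι]

section OrderedRing

theorem dotProduct_pos_of_pos_of_nonneg [Semiring R] [PartialOrder R] [IsStrictOrderedRing R]
    {x y : ι → R} (hx : ∀ i, 0 < x i) (hy : 0 ≤ y) (hy0 : y ≠ 0) : 0 < x ⬝ᵥ y := by
  obtain ⟨j, hj⟩ := Function.ne_iff.mp hy0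
  exact sum_pos' (fun i _ => mul_nonneg (hx i).le (hy i))
    ⟨j, mem_univ j, mul_pos (hx j) ((hy j).lt_of_ne' hj)⟩

theorem mulVec_pos_of_pos [Semiring R] [PartialOrder R] [IsStrictOrderedRing R]
    {B : Matrix ι ι R} (hB : ∀ i j, 0 < B i j) {z : ι → R} (hz : 0 ≤ z) (hz0 : z ≠ 0) (i : ι) :
    0 < (B *ᵥ z) i :=
  dotProduct_pos_of_pos_of_nonneg (hB i) hz hz0

theorem lt_mulVec_mulVec_of_le_mulVec [CommRing R] [PartialOrder R] [IsStrictOrderedRing R]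
    {M B : Matrix ι ι R} (hB : ∀ i j, 0 < B i j) (hMB : Commute M B) {w : ι → R} {c : R}
    (hle : ∀ i, c * w i ≤ (M *ᵥ w) i) (hne : M *ᵥ w ≠ c • w) (i : ι) :
    c * (B *ᵥ w) i < (M *ᵥ (B *ᵥ w)) i := by
  have hpos := mulVec_pos_of_pos hB (z := M *ᵥ w - c • w) (fun i => sub_nonneg.mpr (hle i))
    (sub_ne_zero.mpr hne) i
  rwa [mulVec_sub, mulVec_mulVec, ← hMB.eq, ← mulVec_mulVec, mulVec_smul, Pi.sub_apply,
    Pi.smul_apply, smul_eq_mul, sub_pos] at hpos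

end OrderedRing

section CollatzWielandt

variable [Nonempty ι]

theorem inv_sum_smul_mem_stdSimplex {w : ι → ℝ} (hw : ∀ i, 0 < w i) :
    (∑ i, w i)⁻¹ • w ∈ stdSimplex ℝ ι := by
  have hs : 0 < ∑ i, w i := sum_pos (fun i _ => hw i) univ_nonempty
  refine ⟨fun i => mul_nonneg (inv_nonneg.mpr hs.le) (hw i).le, ?_⟩
  simp only [Pi.smul_apply, smul_eq_mul, ← mul_sum, inv_mul_cancel₀ hs.ne']

noncomputable def collatzWielandt (M : Matrix ι ι ℝ) (w : ι → ℝ) : ℝ :=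
  univ.inf' univ_nonempty fun i => (M *ᵥ w) i / w i

variable {M : Matrix ι ι ℝ} {w : ι → ℝ}

theorem collatzWielandt_mul_le {i : ι} (hw : 0 < w i) :
    collatzWielandt M w * w i ≤ (M *ᵥ w) i :=
  (le_div_iff₀ hw).mp (inf'_le _ (mem_univ i))

theorem lt_collatzWielandt {c : ℝ} (hw : ∀ i, 0 < w i) (h : ∀ i, c * w i < (M *ᵥ w) i) :
    c < collatzWielandt M w :=
  (lt_inf'_iff _).mpr fun i _ => (lt_div_iff₀ (hw i)).mpr (h i)

theorem collatzWielandt_smul {s : ℝ} (hs : s ≠ 0) :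
    collatzWielandt M (s • w) = collatzWielandt M w := by
  simp only [collatzWielandt, mulVec_smul, Pi.smul_apply, smul_eq_mul, mul_div_mul_left _ _ hs]

theorem continuousOn_collatzWielandt :
    ContinuousOn (collatzWielandt M) {w | ∀ i, 0 < w i} :=
  ContinuousOn.finset_inf'_apply _ fun i _ =>
    ((continuous_apply i).comp (continuous_const.matrix_mulVec continuous_id)).continuousOn.div
      (continuous_apply i).continuousOn fun _ (hw : ∀ _, _) => (hw i).ne'

theorem exists_pos_mulVec_eq_smul_of_commute {B : Matrix ι ι ℝ} (hB : ∀ i j, 0 < B i j)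
    (hMB : Commute M B) : ∃ (c : ℝ) (w : ι → ℝ), (∀ i, 0 < w i) ∧ M *ᵥ w = c • w := by
  have hBpos : ∀ x ∈ stdSimplex ℝ ι, ∀ i, 0 < (B *ᵥ x) i := fun x hx =>
    mulVec_pos_of_pos hB hx.1 fun h => by simpa [h] using hx.2
  obtain ⟨x, hx, hmax⟩ := (isCompact_stdSimplex ℝ ι).exists_isMaxOn
    (f := fun x => collatzWielandt M (B *ᵥ x)) ⟨_, inv_sum_smul_mem_stdSimplex fun _ => one_pos⟩
    (continuousOn_collatzWielandt.comp (continuous_const.matrix_mulVec continuous_id).continuousOn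
      hBpos)
  have hw := hBpos x hx
  set w := B *ᵥ x
  refine ⟨collatzWielandt M w, w, hw, ?_⟩
  -- otherwise `B *ᵥ w`, normalised to lie in the simplex, beats the maximum
  by_contra hne
  have hlt : collatzWielandt M w < collatzWielandt M (B *ᵥ w) :=
    lt_collatzWielandt
      (mulVec_pos_of_pos hB (fun i => (hw i).le) fun h =>
        (hw (Classical.arbitrary ι)).ne' (congrFun h _))
      (lt_mulVec_mulVec_of_le_mulVec hB hMB (fun i => collatzWielandt_mul_le (hw i)) hne)
  have hle : collatzWielandt M (B *ᵥ ((∑ i, w i)⁻¹ • w)) ≤ collatzWielandt M w :=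
    hmax (inv_sum_smul_mem_stdSimplex hw)
  rw [mulVec_smul, collatzWielandt_smul (inv_ne_zero (sum_pos (fun i _ => hw i) univ_nonempty).ne')]
    at hle
  linarith

end CollatzWielandt

variable [DecidableEq ι]

theorem mem_spectrum_iff_exists_mulVec_eq_smul [Field K] {M : Matrix ι ι K} {μ : K} :
    μ ∈ spectrum K M ↔ ∃ v ≠ 0, M *ᵥ v = μ • v := by
  rw [spectrum.mem_iff, isUnit_iff_isUnit_det, isUnit_iff_ne_zero, not_not,
    ← exists_mulVec_eq_zero_iff]
  simp only [Algebra.algebraMap_eq_smul_one, sub_mulVec, smul_mulVec, one_mulVec, sub_eq_zero,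
    eq_comm]

theorem mem_spectrum_iff_exists_vecMul_eq_smul [Field K] {M : Matrix ι ι K} {μ : K} :
    μ ∈ spectrum K M ↔ ∃ v ≠ 0, v ᵥ* M = μ • v := by
  rw [spectrum.mem_iff, isUnit_iff_isUnit_det, isUnit_iff_ne_zero, not_not,
    ← exists_vecMul_eq_zero_iff]
  simp only [Algebra.algebraMap_eq_smul_one, vecMul_sub, vecMul_smul, vecMul_one, sub_eq_zero,
    eq_comm]

theorem vecMul_pow_eq_pow_smul [CommSemiring R] {A : Matrix ι ι R} {x : ι → R} {c : R}
    (hxA : x ᵥ* A = c • x) (k : ℕ) : x ᵥ* A ^ k = c ^ k • x := by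
  induction k with
  | zero => simp
  | succ k ih => rw [pow_succ, ← vecMul_vecMul, ih, smul_vecMul, hxA, smul_smul, pow_succ]

theorem vecMul_aeval_eq_eval_smul [CommSemiring R] {A : Matrix ι ι R} {x : ι → R} {c : R}
    (hxA : x ᵥ* A = c • x) (f : R[X]) : x ᵥ* aeval A f = f.eval c • x := by
  induction f using Polynomial.induction_on' with
  | add p q hp hq => rw [map_add, vecMul_add, hp, hq, eval_add, add_smul]
  | monomial k a =>
    rw [aeval_monomial, ← vecMul_vecMul, Algebra.algebraMap_eq_smul_one, vecMul_smul, vecMul_one,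
      smul_vecMul, vecMul_pow_eq_pow_smul hxA, smul_smul, eval_monomial]

section SpectralRadius

variable {A : Matrix ι ι ℝ} {x : ι → ℝ} {c : ℝ}

theorem norm_le_of_mem_spectrum_of_vecMul_eq_smul (hA : ∀ i j, 0 ≤ A i j)
    (hx : ∀ i, 0 < x i) (hxA : x ᵥ* A = c • x) {μ : ℂ}
    (hμ : μ ∈ spectrum ℂ (A.map Complex.ofReal)) : ‖μ‖ ≤ c := by
  obtain ⟨v, hv0, hv⟩ := mem_spectrum_iff_exists_mulVec_eq_smul.mp hμ
  set u : ι → ℝ := fun i => ‖v i‖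
  have hu : ‖μ‖ • u ≤ A *ᵥ u := fun i => calc
    ‖μ‖ * ‖v i‖ = ‖∑ j, (A i j : ℂ) * v j‖ := by
      rw [← norm_mul, ← smul_eq_mul, ← Pi.smul_apply, ← hv]; rfl
    _ ≤ ∑ j, ‖(A i j : ℂ) * v j‖ := norm_sum_le _ _
    _ = (A *ᵥ u) i := by
      simp only [norm_mul, Complex.norm_real, Real.norm_of_nonneg (hA _ _)]; rfl
  have hxu : 0 < x ⬝ᵥ u := dotProduct_pos_of_pos_of_nonneg hx (fun i => norm_nonneg (v i))
    fun h => hv0 (funext fun j => norm_eq_zero.mp (congrFun h j))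
  have key : ‖μ‖ * (x ⬝ᵥ u) ≤ c * (x ⬝ᵥ u) := calc
    ‖μ‖ * (x ⬝ᵥ u) = x ⬝ᵥ (‖μ‖ • u) := by rw [dotProduct_smul, smul_eq_mul]
    _ ≤ x ⬝ᵥ (A *ᵥ u) := dotProduct_le_dotProduct_of_nonneg_left hu fun i => (hx i).le
    _ = c * (x ⬝ᵥ u) := by rw [dotProduct_mulVec, hxA, smul_dotProduct, smul_eq_mul]
  exact le_of_mul_le_mul_right key hxu

theorem ofReal_mem_spectrum_of_vecMul_eq_smul (hx : x ≠ 0) (hxA : x ᵥ* A = c • x) :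
    (c : ℂ) ∈ spectrum ℂ (A.map Complex.ofReal) := by
  refine mem_spectrum_iff_exists_vecMul_eq_smul.mpr ⟨fun i => x i, ?_, ?_⟩
  · exact fun h => hx (funext fun i => Complex.ofReal_eq_zero.mp (congrFun h i))
  · ext i
    simpa [vecMul, dotProduct] using congrArg Complex.ofReal (congrFun hxA i)

end SpectralRadius

end Matrix

section Irreducible

variable {n : ℕ} {A : Matrix (Fin n) (Fin n) ℝ}

theorem matSpecRad_eq_of_vecMul_eq_smul [NeZero n] (hA : ∀ i j, 0 ≤ A i j) {x : Fin n → ℝ}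
    {c : ℝ} (hx : ∀ i, 0 < x i) (hxA : x ᵥ* A = c • x) : matSpecRad A = c := by
  have hmem := ofReal_mem_spectrum_of_vecMul_eq_smul (fun h => (hx 0).ne' (congrFun h 0)) hxA
  have hc : ‖(c : ℂ)‖ = c :=
    (norm_le_of_mem_spectrum_of_vecMul_eq_smul hA hx hxA hmem).antisymm
      (Complex.norm_real c ▸ le_abs_self c)
  exact IsGreatest.csSup_eq ⟨⟨c, hmem, hc⟩, by
    rintro _ ⟨μ, hμ, rfl⟩; exact norm_le_of_mem_spectrum_of_vecMul_eq_smul hA hx hxA hμ⟩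

theorem MatIrreducible.transpose (hirr : MatIrreducible A) : MatIrreducible Aᵀ :=
  fun i j => (hirr j i).imp fun k hk => by rwa [← transpose_pow]

theorem MatIrreducible.exists_sum_pow_pos (hA : ∀ i j, 0 ≤ A i j) (hirr : MatIrreducible A) :
    ∃ m, ∀ i j, 0 < (∑ k ∈ range m, A ^ k) i j := by
  choose K hK using hirr
  obtain ⟨m, hm⟩ := Finite.exists_le fun p : Fin n × Fin n => K p.1 p.2
  refine ⟨m + 1, fun i j => ?_⟩
  rw [Matrix.sum_apply]
  exact (hK i j).trans_le <| single_le_sum (fun k _ => pow_apply_nonneg hA k i j)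
    (mem_range_succ_iff.mpr (hm (i, j)))

theorem exists_pos_vecMul_eq_matSpecRad_smul [NeZero n] (hA : ∀ i j, 0 ≤ A i j)
    (hirr : MatIrreducible A) : ∃ x : Fin n → ℝ, (∀ i, 0 < x i) ∧ x ᵥ* A = matSpecRad A • x := by
  obtain ⟨m, hm⟩ := hirr.transpose.exists_sum_pow_pos fun i j => hA j i
  obtain ⟨c, x, hx, hxA⟩ := exists_pos_mulVec_eq_smul_of_commute hm
    (Commute.sum_right _ _ _ fun k _ => (Commute.refl Aᵀ).pow_right k)
  rw [mulVec_transpose] at hxA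
  exact ⟨x, hx, by rw [matSpecRad_eq_of_vecMul_eq_smul hA hx hxA, hxA]⟩

end Irreducible

theorem stmt1 {n : ℕ} (A : Matrix (Fin n) (Fin n) ℝ)
    (hA : ∀ i j, 0 ≤ A i j) (hirr : MatIrreducible A)
    (f : Polynomial ℝ) (y : Fin n → ℝ) (hy : y ≠ 0) (hy0 : ∀ i, 0 ≤ y i)
    (r : ℝ) (hge : ∀ i, r * y i ≤ ((Polynomial.aeval A) f).mulVec y i) :
    r ≤ f.eval (matSpecRad A) ∧
    (f.eval (matSpecRad A) = r ↔ ∀ i, ((Polynomial.aeval A) f).mulVec y i = r * y i) := by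
  have : NeZero n := ⟨by rintro rfl; exact hy (Subsingleton.elim _ _)⟩
  obtain ⟨x, hx, hxA⟩ := exists_pos_vecMul_eq_matSpecRad_smul hA hirr
  set d := aeval A f *ᵥ y - r • y
  have hd : 0 ≤ d := fun i => sub_nonneg.mpr (hge i)
  have hxd : x ⬝ᵥ d = (f.eval (matSpecRad A) - r) * (x ⬝ᵥ y) := by
    rw [dotProduct_sub, dotProduct_mulVec, vecMul_aeval_eq_eval_smul hxA, smul_dotProduct,
      dotProduct_smul, smul_eq_mul, smul_eq_mul, sub_mul]
  have hxy : 0 < x ⬝ᵥ y := dotProduct_pos_of_pos_of_nonneg hx hy0 hy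
  refine ⟨sub_nonneg.mp <| nonneg_of_mul_nonneg_left
    (hxd ▸ dotProduct_nonneg_of_nonneg (fun i => (hx i).le) hd) hxy, ?_⟩
  calc f.eval (matSpecRad A) = r ↔ x ⬝ᵥ d = 0 := by
        rw [hxd, mul_eq_zero, sub_eq_zero, or_iff_left hxy.ne']
    _ ↔ d = 0 := ⟨fun h => by_contra fun hd0 => (dotProduct_pos_of_pos_of_nonneg hx hd hd0).ne' h,
        fun h => h ▸ dotProduct_zero x⟩
    _ ↔ _ := by simp [funext_iff, d, sub_eq_zero]
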